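/- Suppose μ_i (i ∈ ℕ) are elements of Pr(𝕋) with μ_iˆμ_i = μ_i for every i, and there are sets E_i ⊆ 𝕋 such that μ_i(E_j) = 1 if i = j and μ_i(E_j) = 0 if i ≠ j. Then any weak* limit point μ of the set {μ_i : i ∈ ℕ} satisfies μˆμ ≠ μ. -/

import Mathlib

open scoped Classical

/-- The free binary system (free magma) on one generator. -/
abbrev 𝕋 : Type := FreeMagma Unit

/-- The generator `1` of `𝕋`. -/
def e1 : 𝕋 := FreeMagma.of ()

/-- `#(t)`: the number of occurrences of the generator in `t`. -/
def cnt : 𝕋 → ℕ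
  | FreeMagma.of _ => 1
  | FreeMagma.mul a b => cnt a + cnt b

/-- The space `ℓ^∞(S)` of bounded real-valued functions on `S`. -/
def Bdd (S : Type*) : Type _ := {f : S → ℝ // ∃ M, ∀ s, |f s| ≤ M}

/-- Package a function as an element of `Bdd S` (junk value if unbounded). -/
noncomputable def liftBdd {S : Type*} (g : S → ℝ) : Bdd S :=
  if h : ∃ M, ∀ s, |g s| ≤ M then ⟨g, h⟩ else ⟨fun _ => 0, 0, fun _ => by simp⟩

/-- The constant function as an element of `Bdd S`. -/
def constB (S : Type*) (c : ℝ) : Bdd S := ⟨fun _ => c, |c|, fun _ => le_rfl⟩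

/-- The characteristic function of `E` as an element of `Bdd S`. -/
noncomputable def indB {S : Type*} (E : Set S) : Bdd S :=
  liftBdd (fun s => if s ∈ E then 1 else 0)

/-- `Pr S`: finitely additive probability measures on `S`, identified with the
positive normalized linear functionals on `ℓ^∞(S)`.  The weak* topology is the
subspace topology inherited from the product topology on `Bdd S → ℝ`. -/
def PrSet (S : Type*) : Set (Bdd S → ℝ) :=
  {φ | (∀ f g h : Bdd S, (∀ s, h.1 s = f.1 s + g.1 s) → φ h = φ f + φ g) ∧
       (∀ (c : ℝ) (f g : Bdd S), (∀ s, g.1 s = c * f.1 s) → φ g = c * φ f) ∧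
       (∀ f : Bdd S, (∀ s, 0 ≤ f.1 s) → 0 ≤ φ f) ∧
       φ (constB S 1) = 1}

/-- `μ(E)`: the measure of a set `E ⊆ S`. -/
noncomputable def mE {S : Type*} (φ : Bdd S → ℝ) (E : Set S) : ℝ := φ (indB E)

/-- The product `μ ⊗ ν` of finitely additive measures:
`μ⊗ν(f) = μ(x ↦ ν(y ↦ f(x,y)))`. -/
noncomputable def prodM {S T : Type*} (φ : Bdd S → ℝ) (ψ : Bdd T → ℝ) :
    Bdd (S × T) → ℝ :=
  fun f => φ (liftBdd fun x => ψ (liftBdd fun y => f.1 (x, y)))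

/-- The extension of a binary operation `op` on `S` to `Pr S`:
`μ⋆ν(f) = μ(x ↦ ν(y ↦ f(x ⋆ y)))`. -/
noncomputable def starM {S : Type*} (op : S → S → S) (φ ψ : Bdd S → ℝ) :
    Bdd S → ℝ :=
  fun f => φ (liftBdd fun x => ψ (liftBdd fun y => f.1 (op x y)))

/-- The extension of `ˆ` to `Pr 𝕋`. -/
noncomputable def hmul (φ ψ : Bdd 𝕋 → ℝ) : Bdd 𝕋 → ℝ := starM (· * ·) φ ψ

/-- Finitely supported probability measures: finite convex combinations of
point evaluations. -/
def FinSuppPr (S : Type*) : Set (Bdd S → ℝ) :=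
  {φ | ∃ (F : Finset S) (w : S → ℝ), (∀ s ∈ F, 0 ≤ w s) ∧ (∑ s ∈ F, w s) = 1 ∧
      ∀ f : Bdd S, φ f = ∑ s ∈ F, w s * f.1 s}

/-- `𝔸_n`: finitely supported probability measures concentrated on `𝕋_n`. -/
def Asets (n : ℕ) : Set (Bdd 𝕋 → ℝ) :=
  {φ | ∃ (F : Finset 𝕋) (w : 𝕋 → ℝ), (∀ t ∈ F, cnt t = n) ∧ (∀ t ∈ F, 0 ≤ w t) ∧
      (∑ t ∈ F, w t) = 1 ∧ ∀ f : Bdd 𝕋, φ f = ∑ t ∈ F, w t * f.1 t}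

/-- The extension of `+` on `ℕ` to ultrafilters: `A ∈ U+V` iff
`{m : {n : m+n ∈ A} ∈ V} ∈ U`. -/
noncomputable def addU (U V : Ultrafilter ℕ) : Ultrafilter ℕ :=
  U.bind fun m => V.map fun n => m + n

/-- `𝔸_U`: the `U`-limit of the sets `𝔸_m`. -/
def AU (U : Ultrafilter ℕ) : Set (Bdd 𝕋 → ℝ) :=
  {μ | μ ∈ PrSet 𝕋 ∧ ∀ W : Set (Bdd 𝕋 → ℝ), IsOpen W → μ ∈ W →
      {m : ℕ | (W ∩ Asets m).Nonempty} ∈ U}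

/-- The extension of `ˆ` to ultrafilters on `𝕋`: `E ∈ UˆV` iff
`{u : {v : uˆv ∈ E} ∈ V} ∈ U`. -/
noncomputable def umul (U V : Ultrafilter 𝕋) : Ultrafilter 𝕋 :=
  U.bind fun u => V.map fun v => u * v

/-- Substitution of measures into a term `t`:
`t(μ_0,…,μ_{m-1})(f)` is the nested integral
`μ_0(x_0 ↦ ⋯ μ_{m-1}(x_{m-1} ↦ f(t(x⃗)))⋯)`. -/
noncomputable def substM : 𝕋 → List (Bdd 𝕋 → ℝ) → (Bdd 𝕋 → ℝ)
  | FreeMagma.of _, μs => μs.headI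
  | FreeMagma.mul a b, μs =>
      hmul (substM a (μs.take (cnt a))) (substM b (μs.drop (cnt a)))

/-- `t_k`: iteratively remove the carets of `t` involving only leaves of index
greater than `k`. -/
def tk : 𝕋 → ℕ → 𝕋
  | FreeMagma.of _, _ => e1
  | FreeMagma.mul a b, k => if k < cnt a then tk a k * e1 else a * tk b (k - cnt a)

/-- `l_k(t) = #(t_k) - 2` (truncated subtraction). -/
def lk (t : 𝕋) (k : ℕ) : ℕ := cnt (tk t k) - 2

/-- The subterm `t/σ` of `t` at address `σ` (`false` = left/`0`, `true` = right/`1`). -/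
def subT : 𝕋 → List Bool → Option 𝕋
  | t, [] => some t
  | FreeMagma.of _, _ :: _ => none
  | FreeMagma.mul a b, c :: σ => if c then subT b σ else subT a σ

/-- `σ <_lex ς` for incompatible binary sequences: at the first coordinate where
they differ, `σ` has `0` and `ς` has `1`. -/
def lexLT (σ ς : List Bool) : Prop :=
  ∃ p σ' ς', σ = p ++ (false :: σ') ∧ ς = p ++ (true :: ς')

/-- `x₀·E`. -/
def x0E (E : Set 𝕋) : Set 𝕋 :=
  {x | ∃ a b c : 𝕋, x = a * (b * c) ∧ (a * b) * c ∈ E}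

/-- `x₁·E`. -/
def x1E (E : Set 𝕋) : Set 𝕋 :=
  {x | ∃ s a b c : 𝕋, x = s * (a * (b * c)) ∧ s * ((a * b) * c) ∈ E}

/-- `u_σ` for a nonempty finite binary sequence `σ`. -/
def uSeq : List Bool → 𝕋
  | [] => e1
  | [_] => e1
  | b :: σ => if b then e1 * uSeq σ else uSeq σ * e1

/-- `a ≪ b`: for some `p`, `#(a) < 2^p` and `2^p` divides `#(b)`. -/
def ll (a b : 𝕋) : Prop := ∃ p : ℕ, cnt a < 2 ^ p ∧ 2 ^ p ∣ cnt b

/-- `r↾n`: the first `n` values of `r` as a finite binary sequence. -/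
def rList (r : ℕ → Bool) (n : ℕ) : List Bool := (List.range n).map r

/-- The map `h_r : 𝕋 → 𝕋`. -/
noncomputable def hr (r : ℕ → Bool) : 𝕋 → 𝕋
  | FreeMagma.of _ => uSeq (rList r 1)
  | FreeMagma.mul a b =>
      if ll a b then hr r a * hr r b else uSeq (rList r (cnt a + cnt b))

/-- The action of `h_r` on measures: `h_r(μ)(f) = μ(f ∘ h_r)`. -/
noncomputable def hrM (r : ℕ → Bool) (φ : Bdd 𝕋 → ℝ) : Bdd 𝕋 → ℝ :=
  fun f => φ (liftBdd fun t => f.1 (hr r t))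

/-- `lev`: `l(1) = 0`, `l(aˆb) = l(a) + 1`. -/
def lev : 𝕋 → ℕ
  | FreeMagma.of _ => 0
  | FreeMagma.mul a _ => lev a + 1

/-- `C` is closed under `ˆ`. -/
def HClosed (C : Set (Bdd 𝕋 → ℝ)) : Prop := ∀ μ ∈ C, ∀ ν ∈ C, hmul μ ν ∈ C

open Function
open scoped Pointwise

/-! Disjointify the `Eᵢ` to `Aᵢ`, still with `μᵢ(Aⱼ) = δᵢⱼ`, and let `B = ⋃ᵢ AᵢˆAᵢ`. As the
`Aᵢ` are disjoint and `ˆ` is injective, the section `{y | xˆy ∈ B}` is `Aᵢ` for `x ∈ Aᵢ` and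
empty for `x ∉ ⋃ Aᵢ`. Hence idempotence gives `μᵢ(B) = μᵢˆμᵢ(B) = μᵢ(Aᵢ) = 1` for every `i`, so
`μ(B) = 1`. But for each `i` the point `μ` also lies in the weak* closure of `{μₖ | k ≠ i}`
(the space is T1), so `μ(Aᵢ) = 0` for every `i`, and then `μˆμ(B) = 0`. -/

theorem liftBdd_val {S : Type*} (g : S → ℝ) (h : ∃ M, ∀ s, |g s| ≤ M) :
    (liftBdd g).1 = g := by
  have hg : liftBdd g = ⟨g, h⟩ := dif_pos h
  rw [hg]

theorem indB_val {S : Type*} (E : Set S) :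
    (indB E).1 = fun s => if s ∈ E then 1 else 0 :=
  liftBdd_val _ ⟨1, fun s => by split_ifs <;> norm_num⟩

section PrSet

variable {S : Type*} {φ : Bdd S → ℝ}

theorem mE_empty (hφ : φ ∈ PrSet S) : mE φ ∅ = 0 := by
  have h := hφ.2.1 0 (indB ∅) (indB ∅) fun s => by simp [indB_val]
  rwa [zero_mul] at h

theorem mE_univ (hφ : φ ∈ PrSet S) : mE φ Set.univ = 1 := by
  rw [mE, show indB Set.univ = constB S 1 from Subtype.ext (by simp [indB_val, constB])]
  exact hφ.2.2.2

theorem mE_nonneg (hφ : φ ∈ PrSet S) (A : Set S) : 0 ≤ mE φ A :=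
  hφ.2.2.1 _ fun s => by rw [indB_val]; dsimp only; split_ifs <;> norm_num

theorem mE_union_eq_add_sdiff (hφ : φ ∈ PrSet S) (A C : Set S) :
    mE φ (A ∪ C) = mE φ A + mE φ (C \ A) :=
  hφ.1 _ _ _ fun s => by
    by_cases hA : s ∈ A <;> by_cases hC : s ∈ C <;> simp [indB_val, hA, hC]

theorem mE_mono (hφ : φ ∈ PrSet S) {A C : Set S} (h : A ⊆ C) : mE φ A ≤ mE φ C := by
  rw [← Set.union_eq_self_of_subset_left h, mE_union_eq_add_sdiff hφ]
  linarith [mE_nonneg hφ (C \ A)]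

theorem mE_le_one (hφ : φ ∈ PrSet S) (A : Set S) : mE φ A ≤ 1 :=
  mE_univ hφ ▸ mE_mono hφ (Set.subset_univ A)

theorem mE_union_le (hφ : φ ∈ PrSet S) (A C : Set S) : mE φ (A ∪ C) ≤ mE φ A + mE φ C := by
  rw [mE_union_eq_add_sdiff hφ]
  linarith [mE_mono hφ (Set.sdiff_subset : C \ A ⊆ C)]

theorem sub_le_mE_sdiff (hφ : φ ∈ PrSet S) (A C : Set S) : mE φ A - mE φ C ≤ mE φ (A \ C) := by
  have := mE_mono hφ (Set.subset_union_right : A ⊆ C ∪ A)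
  rw [mE_union_eq_add_sdiff hφ] at this
  linarith

theorem mE_finset_sup_eq_zero (hφ : φ ∈ PrSet S) {ι : Type*} [DecidableEq ι] {E : ι → Set S}
    (s : Finset ι) (h : ∀ j ∈ s, mE φ (E j) = 0) : mE φ (s.sup E) = 0 := by
  induction s using Finset.induction_on with
  | empty => exact mE_empty hφ
  | insert j s _ ih =>
    rw [Finset.forall_mem_insert] at h
    have hle := mE_union_le hφ (E j) (s.sup E)
    rw [h.1, ih h.2] at hle
    rw [Finset.sup_insert]
    exact le_antisymm (hle.trans_eq (add_zero 0)) (mE_nonneg hφ _)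

end PrSet

theorem mE_disjointed {S ι : Type*} [Preorder ι] [LocallyFiniteOrderBot ι] [DecidableEq ι]
    {μs : ι → Bdd S → ℝ} (hpr : ∀ i, μs i ∈ PrSet S) {E : ι → Set S}
    (hE : ∀ i j, mE (μs i) (E j) = if i = j then 1 else 0) (i j : ι) :
    mE (μs i) (disjointed E j) = if i = j then 1 else 0 := by
  split_ifs with hij
  · subst hij
    rw [disjointed_apply]
    have hsup : mE (μs i) ((Finset.Iio i).sup E) = 0 :=
      mE_finset_sup_eq_zero (hpr i) _ fun j hj => by
        rw [hE, if_neg (Finset.mem_Iio.mp hj).ne']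
    have := sub_le_mE_sdiff (hpr i) (E i) ((Finset.Iio i).sup E)
    rw [hE, if_pos rfl, hsup, sub_zero] at this
    exact le_antisymm (mE_le_one (hpr i) _) this
  · have := mE_mono (hpr i) (disjointed_subset E j)
    rw [hE, if_neg hij] at this
    exact le_antisymm this (mE_nonneg (hpr i) _)

theorem FreeMagma.mul_eq_mul_iff {α : Type*} {a b x y : FreeMagma α} :
    a * b = x * y ↔ a = x ∧ b = y :=
  ⟨fun h => by injection h with h1 h2; exact ⟨h1, h2⟩, fun ⟨h1, h2⟩ => h1 ▸ h2 ▸ rfl⟩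

theorem FreeMagma.mul_mem_mul_self_iff {α : Type*} {A : Set (FreeMagma α)}
    {x y : FreeMagma α} : x * y ∈ A * A ↔ x ∈ A ∧ y ∈ A := by
  constructor
  · rintro ⟨a, ha, b, hb, hab⟩
    obtain ⟨rfl, rfl⟩ := FreeMagma.mul_eq_mul_iff.mp hab
    exact ⟨ha, hb⟩
  · rintro ⟨hx, hy⟩
    exact Set.mul_mem_mul hx hy

section Sections

variable {α ι : Type*} {A : ι → Set (FreeMagma α)} {x : FreeMagma α}

theorem preimage_mul_iUnion_mul_self_of_mem (hA : Pairwise (Disjoint on A)) {i : ι}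
    (hx : x ∈ A i) : (x * ·) ⁻¹' ⋃ j, A j * A j = A i := by
  ext y
  simp only [Set.mem_preimage, Set.mem_iUnion, FreeMagma.mul_mem_mul_self_iff]
  refine ⟨fun ⟨j, hxj, hy⟩ => ?_, fun hy => ⟨i, hx, hy⟩⟩
  obtain rfl : j = i := by_contra fun hji => Set.disjoint_left.mp (hA hji) hxj hx
  exact hy

theorem preimage_mul_iUnion_mul_self_of_forall_notMem (hx : ∀ j, x ∉ A j) :
    (x * ·) ⁻¹' ⋃ j, A j * A j = ∅ := by
  ext y
  simp [FreeMagma.mul_mem_mul_self_iff, hx]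

end Sections

theorem mE_hmul_of_sections {φ ψ : Bdd 𝕋 → ℝ} {C A : Set 𝕋}
    (h : ∀ x, mE ψ ((x * ·) ⁻¹' C) = if x ∈ A then 1 else 0) :
    mE (hmul φ ψ) C = mE φ A := by
  simp only [mE, hmul, starM, indB_val C]
  congr 2
  funext x
  exact h x

theorem mE_hmul_iUnion_mul_self {ι : Type*} {A : ι → Set 𝕋} (hA : Pairwise (Disjoint on A))
    {φ ψ : Bdd 𝕋 → ℝ} (I : Set ι) (hψA : ∀ j, mE ψ (A j) = if j ∈ I then 1 else 0)
    (hψ : mE ψ ∅ = 0) : mE (hmul φ ψ) (⋃ j, A j * A j) = mE φ (⋃ j ∈ I, A j) := by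
  refine mE_hmul_of_sections fun x => ?_
  by_cases hx : ∃ j, x ∈ A j
  · obtain ⟨j, hxj⟩ := hx
    have hmem : x ∈ ⋃ k ∈ I, A k ↔ j ∈ I := by
      simp only [Set.mem_iUnion₂]
      refine ⟨fun ⟨k, hk, hxk⟩ => ?_, fun hj => ⟨j, hj, hxj⟩⟩
      obtain rfl : k = j := by_contra fun hkj => Set.disjoint_left.mp (hA hkj) hxk hxj
      exact hk
    rw [preimage_mul_iUnion_mul_self_of_mem hA hxj, hψA, hmem]
  · push Not at hx
    rw [preimage_mul_iUnion_mul_self_of_forall_notMem hx, hψ, if_neg]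
    simpa using fun j _ => hx j

theorem AccPt.mem_closure_image_compl {X ι : Type*} [TopologicalSpace X] [T1Space X]
    {f : ι → X} {x : X} (hx : AccPt x (Filter.principal (Set.range f))) (i : ι) :
    x ∈ closure (f '' {i}ᶜ) := by
  rw [accPt_principal_iff_clusterPt, ← mem_closure_iff_clusterPt] at hx
  have hsub : Set.range f \ {x} ⊆ f '' {i}ᶜ ∪ ({f i} \ {x}) := by
    rintro _ ⟨⟨k, rfl⟩, hk⟩
    by_cases hki : k = i
    · exact Or.inr (hki ▸ ⟨rfl, hk⟩)
    · exact Or.inl ⟨k, hki, rfl⟩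
  have hfin : IsClosed ({f i} \ {x}) := (Set.finite_singleton _).sdiff.isClosed
  have hcl := closure_mono hsub hx
  rw [closure_union] at hcl
  rcases hcl with h | h
  · exact h
  · rw [hfin.closure_eq] at h
    exact absurd rfl h.2

theorem AccPt.apply_eq_of_forall_ne {α ι β : Type*} [TopologicalSpace β] [T2Space β]
    {μs : ι → α → β} {μ : α → β} (hμ : AccPt μ (Filter.principal (Set.range μs))) (i : ι)
    {a : α} {c : β} (h : ∀ k ≠ i, μs k a = c) : μ a = c :=
  closure_minimal (t := {φ : α → β | φ a = c}) (Set.image_subset_iff.mpr fun k hk => h k hk)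
    (isClosed_eq (continuous_apply a) continuous_const) (hμ.mem_closure_image_compl i)

/-- Proposition 6.1: a weak* limit point of a sequence of
idempotents with pairwise "orthogonal" witnessing sets is not idempotent. -/
theorem limit_of_orthogonal_idempotents_not_idempotent
    (μs : ℕ → (Bdd 𝕋 → ℝ)) (hpr : ∀ i, μs i ∈ PrSet 𝕋)
    (hid : ∀ i, hmul (μs i) (μs i) = μs i)
    (E : ℕ → Set 𝕋)
    (hE : ∀ i j, mE (μs i) (E j) = if i = j then 1 else 0)
    (μ : Bdd 𝕋 → ℝ) (hμ : AccPt μ (Filter.principal (Set.range μs))) :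
    hmul μ μ ≠ μ := by
  intro hμμ
  set A := disjointed E
  have hA := mE_disjointed hpr hE
  have hμs_B : ∀ k, mE (μs k) (⋃ j, A j * A j) = 1 := fun k => by
    rw [← hid k, mE_hmul_iUnion_mul_self (disjoint_disjointed E) {k}
      (fun j => by simp [hA, eq_comm]) (mE_empty (hpr k))]
    rw [Set.biUnion_singleton, hA, if_pos rfl]
  have hμ_A : ∀ j, mE μ (A j) = 0 := fun j =>
    hμ.apply_eq_of_forall_ne j fun k hkj => (hA k j).trans (if_neg hkj)
  have hμ_empty : mE μ ∅ = 0 := hμ.apply_eq_of_forall_ne 0 fun k _ => mE_empty (hpr k)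
  have hμ_B : mE μ (⋃ j, A j * A j) = 1 := hμ.apply_eq_of_forall_ne 0 fun k _ => hμs_B k
  rw [← hμμ, mE_hmul_iUnion_mul_self (disjoint_disjointed E) ∅ (by simpa using hμ_A) hμ_empty]
    at hμ_B
  simp [hμ_empty] at hμ_B
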